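/- Theorem 1 (universal approximation of continuous set functions on angles by max pooling). Fix an integer M ≥ 1 and let f be a continuous set function on nonempty finite subsets of [0, 2π]. Then for every ε > 0 there exist an integer K ≥ 1, a continuous function h : [0, 2π] → ℝ^K, and a continuous function γ : ℝ^K → ℝ such that for all u_1, …, u_M ∈ [0, 2π], |f({u_1, …, u_M}) − γ(MAX(h(u_1), …, h(u_M)))| < ε, where MAX denotes the elementwise vector maximum; in particular, since γ ∘ MAX is a symmetric function of its arguments, f is approximated to within ε by a symmetric function of the form γ ∘ MAX ∘ h. -/

import Mathlib

/-!
Pick a finite `δ`-net `c₁, …, c_K` of `[0, 2π]` and the features `h(x)_k = -|x - c_k|`. Max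
pooling turns them into the distance profile `MAX_i h(u_i) = (-dist(c_k, S))_k` of the set
`S = {u₁, …, u_M}`, and two sets whose profiles are `η`-close in the sup norm are
`(2δ + η)`-close in the Hausdorff distance, which dominates the angular one. By uniform
continuity, `f(S)` is therefore nearly a function of the pooled vector `P(S)`, and the
inf-convolution `γ(y) = inf_S (f(S) + L ‖y - P(S)‖)` with a large slope `L` turns this near
dependence into a Lipschitz function `γ`.
-/

open Real Set

/-- The angular distance between two angles. -/
noncomputable def angDist (u v : ℝ) : ℝ := min |u - v| (2 * π - |u - v|)

/-- Directed Hausdorff distance between two (nonempty) finite sets of angles: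
`dH S S' = max_{u' ∈ S'} min_{u ∈ S} angDist u u'` (junk value `0` if either set
is empty). -/
noncomputable def dirHaus (S S' : Finset ℝ) : ℝ :=
  if h : S.Nonempty ∧ S'.Nonempty then
    S'.sup' h.2 (fun u' => S.inf' h.1 (fun u => angDist u u'))
  else 0

/-- Elementwise vector maximum of `M` vectors in `ℝ^K`
(junk value `0` in each coordinate if `M = 0`). -/
noncomputable def vecMax {K M : ℕ} (v : Fin M → Fin K → ℝ) : Fin K → ℝ :=
  fun k =>
    if h : (Finset.univ : Finset (Fin M)).Nonempty then
      Finset.univ.sup' h (fun i => v i k)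
    else 0

open Metric

theorem LipschitzWith.ciInf {ι Y : Type*} [PseudoMetricSpace Y] [Nonempty ι] {K : NNReal}
    {F : ι → Y → ℝ} (hF : ∀ i, LipschitzWith K (F i))
    (hbdd : ∀ y, BddBelow (range fun i => F i y)) :
    LipschitzWith K fun y => ⨅ i, F i y :=
  LipschitzWith.of_le_add_mul K fun x y => by
    rw [← sub_le_iff_le_add]
    refine le_ciInf fun i => ?_
    rw [sub_le_iff_le_add]
    calc ⨅ i, F i x ≤ F i x := ciInf_le (hbdd x) i
      _ ≤ F i y + K * dist x y := (hF i).le_add_mul x y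

theorem exists_continuous_comp_approx {α Y : Type*} [PseudoMetricSpace Y] {s : Set α}
    {g : α → ℝ} {Φ : α → Y} {B η ε : ℝ} (hη : 0 < η) (hg : ∀ x ∈ s, |g x| ≤ B)
    (hgΦ : ∀ x ∈ s, ∀ y ∈ s, dist (Φ x) (Φ y) ≤ η → g x ≤ g y + ε) :
    ∃ γ : Y → ℝ, Continuous γ ∧ ∀ x ∈ s, γ (Φ x) ≤ g x ∧ g x ≤ γ (Φ x) + ε := by
  rcases s.eq_empty_or_nonempty with rfl | ⟨x₀, hx₀⟩
  · exact ⟨0, continuous_const, fun x hx => hx.elim⟩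
  have : Nonempty s := ⟨⟨x₀, hx₀⟩⟩
  have hB : 0 ≤ B := (abs_nonneg _).trans (hg x₀ hx₀)
  have hε : 0 ≤ ε := by linarith [hgΦ x₀ hx₀ x₀ hx₀ (by simpa using hη.le)]
  -- beyond distance `η` the penalty `L * dist` exceeds the oscillation `2 * B` of `g`
  set L : NNReal := ⟨2 * B / η, div_nonneg (by linarith) hη.le⟩
  have hLη : (L : ℝ) * η = 2 * B := div_mul_cancel₀ _ hη.ne'
  have hbdd : ∀ y, BddBelow (range fun p : s => g p + L * dist y (Φ p)) := fun y =>
    ⟨-B, forall_mem_range.2 fun p => by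
      nlinarith [(abs_le.1 (hg p p.2)).1, L.2, dist_nonneg (x := y) (y := Φ p)]⟩
  refine ⟨fun y => ⨅ p : s, g p + L * dist y (Φ p), ?_, fun x hx => ⟨?_, ?_⟩⟩
  · refine (LipschitzWith.ciInf (K := L) (fun p => ?_) hbdd).continuous
    exact LipschitzWith.of_le_add_mul L fun y y' => by
      nlinarith [dist_triangle y y' (Φ p), L.2]
  · simpa using ciInf_le (hbdd (Φ x)) ⟨x, hx⟩
  · rw [← sub_le_iff_le_add]
    refine le_ciInf fun p => ?_
    rcases le_or_gt (dist (Φ x) (Φ p)) η with hclose | hfar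
    · nlinarith [hgΦ x hx p p.2 hclose, L.2, dist_nonneg (x := Φ x) (y := Φ p)]
    · have : (L : ℝ) * η ≤ L * dist (Φ x) (Φ p) := mul_le_mul_of_nonneg_left hfar.le L.2
      nlinarith [abs_le.1 (hg x hx), abs_le.1 (hg p p.2)]

theorem IsCompact.exists_fin_dense {α : Type*} [PseudoMetricSpace α] {s : Set α}
    (hs : IsCompact s) (hne : s.Nonempty) {ρ : ℝ} (hρ : 0 < ρ) :
    ∃ K : ℕ, 1 ≤ K ∧ ∃ c : Fin K → α, ∀ x ∈ s, ∃ k, dist x (c k) < ρ := by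
  obtain ⟨T, -, hT, hsT⟩ := hs.finite_cover_balls hρ
  obtain ⟨K, c, -, rfl⟩ := hT.fin_param
  have hc : ∀ x ∈ s, ∃ k, dist x (c k) < ρ := fun x hx => by
    simpa [mem_ball] using hsT hx
  obtain ⟨k, -⟩ := hc _ hne.some_mem
  exact ⟨K, k.pos, c, hc⟩

theorem hausdorffDist_range_le_dist {ι α : Type*} [Fintype ι] [PseudoMetricSpace α]
    (u v : ι → α) : hausdorffDist (range u) (range v) ≤ dist u v :=
  hausdorffDist_le_of_mem_dist dist_nonneg
    (forall_mem_range.2 fun i => ⟨v i, mem_range_self i, dist_le_pi_dist u v i⟩)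
    (forall_mem_range.2 fun i => ⟨u i, mem_range_self i, dist_comm u v ▸ dist_le_pi_dist v u i⟩)

section DistanceProfile

variable {α : Type*} [PseudoMetricSpace α] {ρ η : ℝ}

theorem infDist_le_of_infDist_le_add {s t : Set α} {x c : α} (hx : x ∈ t) (hxc : dist x c ≤ ρ)
    (hc : infDist c s ≤ infDist c t + η) : infDist x s ≤ 2 * ρ + η :=
  calc infDist x s ≤ infDist c s + dist x c := infDist_le_infDist_add_dist
    _ ≤ dist c x + η + dist x c := by linarith [infDist_le_dist_of_mem (x := c) hx]
    _ ≤ 2 * ρ + η := by rw [dist_comm c x]; linarith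

theorem hausdorffDist_le_of_dist_infDist_le {κ : Type*} [Fintype κ] {s t : Set α} {c : κ → α}
    (hρ : 0 ≤ ρ) (hc : ∀ x ∈ s ∪ t, ∃ k, dist x (c k) ≤ ρ)
    (hst : dist (fun k => infDist (c k) s) (fun k => infDist (c k) t) ≤ η) :
    hausdorffDist s t ≤ 2 * ρ + η := by
  have hk : ∀ k, |infDist (c k) s - infDist (c k) t| ≤ η := fun k =>
    (dist_le_pi_dist _ _ k).trans hst
  refine hausdorffDist_le_of_infDist (by linarith [dist_nonneg.trans hst]) ?_ ?_
  · intro x hx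
    obtain ⟨k, hxk⟩ := hc x (Or.inl hx)
    exact infDist_le_of_infDist_le_add hx hxk (by linarith [abs_le.1 (hk k)])
  · intro x hx
    obtain ⟨k, hxk⟩ := hc x (Or.inr hx)
    exact infDist_le_of_infDist_le_add hx hxk (by linarith [abs_le.1 (hk k)])

end DistanceProfile

theorem angDist_le_abs_sub (u v : ℝ) : angDist u v ≤ |u - v| := min_le_left _ _

theorem dirHaus_le_hausdorffDist (S S' : Finset ℝ) :
    dirHaus S S' ≤ hausdorffDist (S : Set ℝ) S' := by
  rw [dirHaus]
  split_ifs with h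
  · refine Finset.sup'_le _ _ fun y hy => ?_
    calc S.inf' h.1 (fun x => angDist x y) ≤ infDist y S := by
          refine (le_infDist (by simpa using h.1)).2 fun x hx => ?_
          rw [Real.dist_eq, abs_sub_comm]
          exact (Finset.inf'_le _ hx).trans (angDist_le_abs_sub x y)
      _ ≤ hausdorffDist (S' : Set ℝ) S :=
          infDist_le_hausdorffDist_of_mem hy <| hausdorffEDist_ne_top_of_nonempty_of_bounded
            (by simpa using h.2) (by simpa using h.1) S'.finite_toSet.isBounded
            S.finite_toSet.isBounded
      _ = hausdorffDist (S : Set ℝ) S' := hausdorffDist_comm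
  · exact hausdorffDist_nonneg

theorem vecMax_neg_abs_sub {K M : ℕ} [Nonempty (Fin M)] (c : Fin K → ℝ) (u : Fin M → ℝ) :
    vecMax (fun i k => -|u i - c k|) = -fun k => infDist (c k) (range u) := by
  funext k
  rw [vecMax, dif_pos Finset.univ_nonempty]
  apply le_antisymm
  · refine Finset.sup'_le _ _ fun i _ => neg_le_neg ?_
    simpa [Real.dist_eq, abs_sub_comm] using infDist_le_dist_of_mem (x := c k) (mem_range_self i)
  · rw [Pi.neg_apply, neg_le, le_infDist (range_nonempty u)]
    rintro _ ⟨j, rfl⟩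
    rw [neg_le, Real.dist_eq, abs_sub_comm]
    exact Finset.le_sup' (fun i => -|u i - c k|) (Finset.mem_univ j)

section SetFunction

variable {ι : Type*} [Fintype ι]

theorem exists_hausdorffDist_modulus [Nonempty ι] {f : Finset ℝ → ℝ}
    (hf : ∀ ε > (0 : ℝ), ∃ δ > (0 : ℝ), ∀ S S' : Finset ℝ,
      S.Nonempty → S'.Nonempty →
      ↑S ⊆ Icc (0 : ℝ) (2 * π) → ↑S' ⊆ Icc (0 : ℝ) (2 * π) →
      dirHaus S S' < δ → dirHaus S' S < δ → |f S - f S'| < ε) :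
    ∀ ε > (0 : ℝ), ∃ δ > (0 : ℝ), ∀ u ∈ univ.pi fun _ : ι => Icc (0 : ℝ) (2 * π),
      ∀ v ∈ univ.pi fun _ : ι => Icc (0 : ℝ) (2 * π), hausdorffDist (range u) (range v) < δ →
        |f (Finset.image u Finset.univ) - f (Finset.image v Finset.univ)| < ε := by
  intro ε hε
  obtain ⟨δ, hδ, hfδ⟩ := hf ε hε
  refine ⟨δ, hδ, fun u hu v hv huv => ?_⟩
  have hrange : ∀ w : ι → ℝ, ((Finset.image w Finset.univ : Finset ℝ) : Set ℝ) = range w :=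
    fun w => by simp
  refine hfδ _ _ (Finset.univ_nonempty.image u) (Finset.univ_nonempty.image v) ?_ ?_ ?_ ?_
  · simpa [hrange, range_subset_iff] using mem_univ_pi.1 hu
  · simpa [hrange, range_subset_iff] using mem_univ_pi.1 hv
  · exact (dirHaus_le_hausdorffDist _ _).trans_lt (by rwa [hrange, hrange])
  · exact (dirHaus_le_hausdorffDist _ _).trans_lt (by rwa [hrange, hrange, hausdorffDist_comm])

theorem continuousOn_of_hausdorffDist_modulus {s : Set (ι → ℝ)} {g : (ι → ℝ) → ℝ}
    (hg : ∀ ε > (0 : ℝ), ∃ δ > (0 : ℝ), ∀ u ∈ s, ∀ v ∈ s,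
      hausdorffDist (range u) (range v) < δ → |g u - g v| < ε) :
    ContinuousOn g s := by
  refine Metric.continuousOn_iff.2 fun v hv ε hε => ?_
  obtain ⟨δ, hδ, hgδ⟩ := hg ε hε
  exact ⟨δ, hδ, fun u hu huv => hgδ u hu v hv ((hausdorffDist_range_le_dist u v).trans_lt huv)⟩

end SetFunction

/-- **Theorem 1** (universal approximation of continuous set functions on angles
by max pooling). -/
theorem universal_approx_max_pooling (M : ℕ) (hM : 1 ≤ M) (f : Finset ℝ → ℝ)
    (hf : ∀ ε > (0 : ℝ), ∃ δ > (0 : ℝ), ∀ S S' : Finset ℝ,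
      S.Nonempty → S'.Nonempty →
      ↑S ⊆ Icc (0 : ℝ) (2 * π) → ↑S' ⊆ Icc (0 : ℝ) (2 * π) →
      dirHaus S S' < δ → dirHaus S' S < δ → |f S - f S'| < ε) :
    ∀ ε > (0 : ℝ), ∃ K : ℕ, 1 ≤ K ∧
      ∃ h : ℝ → Fin K → ℝ, ∃ γ : (Fin K → ℝ) → ℝ,
        ContinuousOn h (Icc (0 : ℝ) (2 * π)) ∧ Continuous γ ∧
        ∀ u : Fin M → ℝ, (∀ i, u i ∈ Icc (0 : ℝ) (2 * π)) →
          |f (Finset.image u Finset.univ) - γ (vecMax (fun i => h (u i)))| < ε := by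
  have : Nonempty (Fin M) := ⟨⟨0, hM⟩⟩
  intro ε hε
  have hmod := exists_hausdorffDist_modulus (ι := Fin M) hf
  obtain ⟨B, hB⟩ := (isCompact_univ_pi fun _ => isCompact_Icc).exists_bound_of_continuousOn
    (continuousOn_of_hausdorffDist_modulus hmod)
  obtain ⟨δ, hδ, hfδ⟩ := hmod (ε / 2) (half_pos hε)
  obtain ⟨K, hK, c, hc⟩ := isCompact_Icc.exists_fin_dense (nonempty_Icc.2 two_pi_pos.le)
    (by positivity : 0 < δ / 4)
  set Φ : (Fin M → ℝ) → Fin K → ℝ := fun u => -fun k => infDist (c k) (range u)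
  have hclose : ∀ u ∈ univ.pi fun _ => Icc 0 (2 * π), ∀ v ∈ univ.pi fun _ => Icc 0 (2 * π),
      dist (Φ u) (Φ v) ≤ δ / 4 →
        f (Finset.image u Finset.univ) ≤ f (Finset.image v Finset.univ) + ε / 2 := by
    intro u hu v hv huv
    have hnet : ∀ x ∈ range u ∪ range v, ∃ k, dist x (c k) ≤ δ / 4 := by
      rintro _ (⟨i, rfl⟩ | ⟨i, rfl⟩)
      · exact (hc _ (mem_univ_pi.1 hu i)).imp fun _ => le_of_lt
      · exact (hc _ (mem_univ_pi.1 hv i)).imp fun _ => le_of_lt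
    have hH := hausdorffDist_le_of_dist_infDist_le (by positivity) hnet
      ((dist_neg_neg _ _).symm.trans_le huv)
    linarith [abs_lt.1 (hfδ u hu v hv (by linarith))]
  obtain ⟨γ, hγ, hγΦ⟩ := exists_continuous_comp_approx (by positivity : 0 < δ / 4)
    (fun u hu => (Real.norm_eq_abs _).symm.trans_le (hB u hu)) hclose
  refine ⟨K, hK, fun x k => -|x - c k|, γ, by fun_prop, hγ, fun u hu => ?_⟩
  rw [vecMax_neg_abs_sub]
  obtain ⟨hle, hge⟩ := hγΦ u (mem_univ_pi.2 hu)
  rw [abs_lt]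
  constructor <;> linarith
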